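/- arXiv:2108.03022 — 5 statements merged into one kernel-verified Lean document; each statement's English description precedes it below -/
import Mathlib

section
/- Let Π be an epistemic logic program. Every world view of Π is a plausible world view interpretation of Π; that is, if W ∈ WVS(Π), then AS(Π_pe^W) ≠ ∅, where Π_pe = {r ∈ Π : ax-ats(r) = ∅} is the purely-epistemic part of Π. -/
/- Formalization of epistemic logic programs (ELPs), following the paper
   "Utilizing Treewidth for Quantitative Reasoning on Epistemic Logic Programs". -/

namespace ELP

variable {α : Type}

/-- A literal over atoms `α`: an atom together with a polarity
    (`true` = the atom itself, `false` = its classical negation `¬a`). -/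
abbrev Lit (α : Type) := α × Bool

/-- A rule of a plain (disjunctive) logic program:
    `a₁ ∨ … ∨ a_k ← a_{k+1}, …, a_m, ¬a_{m+1}, …, ¬a_n`. -/
structure PRule (α : Type) where
  head : Set α
  bpos : Set α
  bneg : Set α

/-- An interpretation `I` satisfies a rule `r` if `(H_r ∪ B⁻_r) ∩ I ≠ ∅` or `B⁺_r ⊄ I`. -/
def PRule.SatBy (r : PRule α) (I : Set α) : Prop :=
  ((r.head ∪ r.bneg) ∩ I).Nonempty ∨ ¬ r.bpos ⊆ I

/-- `I` is a model of the program `P`. -/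
def IsModelOf (I : Set α) (P : Set (PRule α)) : Prop := ∀ r ∈ P, r.SatBy I

/-- The Gelfond–Lifschitz reduct `P^I`: drop rules whose negative body intersects `I`,
    and delete the negative bodies of the remaining rules. -/
def glReduct (P : Set (PRule α)) (I : Set α) : Set (PRule α) :=
  { r' | ∃ r ∈ P, r.bneg ∩ I = ∅ ∧ r' = ⟨r.head, r.bpos, ∅⟩ }

/-- `I` is an answer set of `P` if it is a ⊆-minimal model of the GL reduct `P^I`. -/
def IsAnswerSet (P : Set (PRule α)) (I : Set α) : Prop :=
  IsModelOf I (glReduct P I) ∧ ∀ J ⊆ I, IsModelOf J (glReduct P I) → J = I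

/-- `AS(P)`, the set of answer sets of `P`. -/
def answerSets (P : Set (PRule α)) : Set (Set α) := { I | IsAnswerSet P I }

/-- A rule of an epistemic logic program (ELP):
    `a₁ ∨ … ∨ a_k ← ℓ_{k+1}, …, ℓ_m, ξ_{m+1}, …, ξ_j, ¬ξ_{j+1}, …, ¬ξ_n`,
    where the objective literals `ℓ_i` are split into positive (`bpos`) and negative
    (`bneg`) body atoms, `epos` are the epistemic literals `not ℓ` occurring positively
    and `eneg` those occurring under classical negation `¬`. -/
structure ERule (α : Type) where
  head : Set α
  bpos : Set α
  bneg : Set α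
  epos : Set (Lit α)
  eneg : Set (Lit α)

/-- `ex-ats(r)`: the atoms occurring in epistemic literals of `r`. -/
def ERule.exats (r : ERule α) : Set α := Prod.fst '' (r.epos ∪ r.eneg)

/-- `ats(r)`: all atoms occurring in `r`. -/
def ERule.ats (r : ERule α) : Set α := r.head ∪ r.bpos ∪ r.bneg ∪ r.exats

/-- `ax-ats(r) = ats(r) \ ex-ats(r)`: the non-epistemic atoms of `r`. -/
def ERule.axats (r : ERule α) : Set α := r.ats \ r.exats

/-- A rule is purely-epistemic if `ax-ats(r) = ∅`. -/
def ERule.PurelyEpistemic (r : ERule α) : Prop := r.axats = ∅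

/-- Well-formedness of an ELP rule, reflecting that in
    `a₁ ∨ … ∨ a_k ← ℓ_{k+1}, …, ℓ_m, ξ_{m+1}, …, ξ_n` the atoms `a₁, …, a_n`
    are distinct (in particular the head/body atoms are disjoint from the
    epistemic atoms) and that rules are finite objects. -/
def ERule.Wf (r : ERule α) : Prop :=
  (r.head ∪ r.bpos ∪ r.bneg) ∩ r.exats = ∅ ∧
  r.head ∩ r.bpos = ∅ ∧ r.head ∩ r.bneg = ∅ ∧ r.bpos ∩ r.bneg = ∅ ∧
  r.ats.Finite

/-- `ex-ats(Π)`. -/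
def elpExats (P : Set (ERule α)) : Set α := ⋃ r ∈ P, r.exats

/-- `ats(Π)`. -/
def elpAts (P : Set (ERule α)) : Set α := ⋃ r ∈ P, r.ats

/-- The purely-epistemic part `Π_pe = {r ∈ Π : ax-ats(r) = ∅}` of `Π`. -/
def peParts (P : Set (ERule α)) : Set (ERule α) := { r ∈ P | r.PurelyEpistemic }

/-- All rules of the ELP are well-formed. -/
def WfELP (P : Set (ERule α)) : Prop := ∀ r ∈ P, r.Wf

/-- A world view interpretation (WVI) over a set `A` of atoms:
    a consistent set of literals over `A`. -/
def IsWVI (A : Set α) (I : Set (Lit α)) : Prop :=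
  (∀ l ∈ I, l.1 ∈ A) ∧ ∀ a : α, ¬ ((a, true) ∈ I ∧ (a, false) ∈ I)

/-- The restriction `I|X` of a set of literals `I` to literals over atoms in `X`. -/
def restrict (I : Set (Lit α)) (X : Set α) : Set (Lit α) := { l ∈ I | l.1 ∈ X }

/-- The epistemic reduct `Π^I`: each epistemic literal `not ℓ` is replaced by `⊥`
    if `ℓ ∈ I` and by `⊤` otherwise.  A rule survives (with its epistemic literals
    deleted) iff no body occurrence becomes `⊥`, i.e. iff `ℓ ∉ I` for every positive
    epistemic literal `not ℓ` and `ℓ ∈ I` for every epistemic literal `not ℓ`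
    occurring under classical negation `¬`. -/
def ereduct (P : Set (ERule α)) (I : Set (Lit α)) : Set (PRule α) :=
  { r' | ∃ r ∈ P, (∀ l ∈ r.epos, l ∉ I) ∧ (∀ l ∈ r.eneg, l ∈ I) ∧
         r' = ⟨r.head, r.bpos, r.bneg⟩ }

/-- `I ⊨_p Π`: the WVI `I` is plausible for `Π`, i.e. `AS(Π_pe^I) ≠ ∅`. -/
def PlausibleFor (P : Set (ERule α)) (I : Set (Lit α)) : Prop :=
  (answerSets (ereduct (peParts P) I)).Nonempty

/-- Compatibility of a WVI `I` over `A` with a set `Js` of interpretations. -/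
def Compatible (A : Set α) (I : Set (Lit α)) (Js : Set (Set α)) : Prop :=
  Js.Nonempty ∧
  (∀ a : α, (a, true) ∈ I → ∀ J ∈ Js, a ∈ J) ∧
  (∀ a : α, (a, false) ∈ I → ∀ J ∈ Js, a ∉ J) ∧
  (∀ a ∈ A, (a, true) ∉ I → (a, false) ∉ I →
    (∃ J ∈ Js, a ∈ J) ∧ ∃ J' ∈ Js, a ∉ J')

/-- `W` is a world view of `Π`: a WVI over `ats(Π)` compatible with `AS(Π^W)`. -/
def IsWorldView (P : Set (ERule α)) (W : Set (Lit α)) : Prop :=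
  IsWVI (elpAts P) W ∧ Compatible (elpAts P) W (answerSets (ereduct P W))

/-!
By well-formedness, a purely-epistemic rule has no objective atoms at all, so its surviving
copy in an epistemic reduct is the empty constraint `← `, which no interpretation satisfies.
Since `Π_pe^W ⊆ Π^W` and `Π^W` has an answer set when `W` is a world view, no such rule
survives: `Π_pe^W` is empty, and `∅` is its answer set.
-/

def PRule.falsum : PRule α := ⟨∅, ∅, ∅⟩

theorem PRule.not_satBy_falsum (I : Set α) : ¬ (PRule.falsum : PRule α).SatBy I := by
  simp [PRule.SatBy, PRule.falsum]

theorem glReduct_falsum_mem {P : Set (PRule α)} (h : PRule.falsum ∈ P) (I : Set α) :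
    PRule.falsum ∈ glReduct P I :=
  ⟨PRule.falsum, h, Set.empty_inter I, rfl⟩

theorem answerSets_eq_empty_of_falsum_mem {P : Set (PRule α)} (h : PRule.falsum ∈ P) :
    answerSets P = ∅ :=
  Set.eq_empty_of_forall_notMem fun I hI =>
    PRule.not_satBy_falsum I (hI.1 _ (glReduct_falsum_mem h I))

theorem empty_mem_answerSets_empty : (∅ : Set α) ∈ answerSets (∅ : Set (PRule α)) := by
  refine ⟨?_, fun J hJ _ => Set.subset_empty_iff.mp hJ⟩
  rintro _ ⟨r, hr, -⟩
  exact absurd hr (Set.notMem_empty r)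

theorem ERule.objective_atoms_eq_empty {r : ERule α} (hwf : r.Wf) (hpe : r.PurelyEpistemic) :
    r.head ∪ r.bpos ∪ r.bneg = ∅ := by
  have hsub : r.head ∪ r.bpos ∪ r.bneg ⊆ r.exats := fun a ha => by
    by_contra hna
    have hax : a ∈ r.axats := ⟨Or.inl ha, hna⟩
    rwa [hpe] at hax
  rw [← hwf.1]
  exact (Set.inter_eq_left.mpr hsub).symm

theorem ereduct_mono {P Q : Set (ERule α)} (hPQ : P ⊆ Q) (I : Set (Lit α)) :
    ereduct P I ⊆ ereduct Q I := by
  rintro _ ⟨r, hr, hpos, hneg, rfl⟩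
  exact ⟨r, hPQ hr, hpos, hneg, rfl⟩

theorem ereduct_peParts_subset_falsum {P : Set (ERule α)} (hwf : WfELP P) (I : Set (Lit α)) :
    ereduct (peParts P) I ⊆ {PRule.falsum} := by
  rintro _ ⟨r, ⟨hrP, hpe⟩, -, -, rfl⟩
  obtain ⟨⟨hhead, hbpos⟩, hbneg⟩ :=
    Set.union_empty_iff.mp (r.objective_atoms_eq_empty (hwf r hrP) hpe) |>.imp_left
      Set.union_empty_iff.mp
  simp [PRule.falsum, hhead, hbpos, hbneg]

/-- Every world view of an ELP `Π` is a plausible world view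
    interpretation of `Π`: if `W ∈ WVS(Π)` then `AS(Π_pe^W) ≠ ∅`. -/
theorem worldView_is_plausible (P : Set (ERule α)) (hwf : WfELP P)
    (W : Set (Lit α)) (hW : IsWorldView P W) :
    PlausibleFor P W := by
  obtain ⟨-, ⟨J, hJ⟩, -⟩ := hW
  have hfalsum : PRule.falsum ∉ ereduct P W := fun h => by
    rw [answerSets_eq_empty_of_falsum_mem h] at hJ
    exact hJ
  have hempty : ereduct (peParts P) W = ∅ := by
    refine Set.eq_empty_of_forall_notMem fun r hr => ?_
    have hr_falsum : r = PRule.falsum := ereduct_peParts_subset_falsum hwf W hr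
    exact hfalsum (hr_falsum ▸ ereduct_mono (fun _ h => h.1) W hr)
  rw [PlausibleFor, hempty]
  exact ⟨∅, empty_mem_answerSets_empty⟩

end ELP
end

section
/- Let F be a 3-CNF formula over a finite variable set V and let Π_F be the associated ELP. If M ⊆ V is a model of F, then the WVI I_M := {v : v ∈ M} ∪ {¬v : v ∈ V \ M} over V is a plausible WVI of Π_F, i.e., I_M ⊨_p Π_F. -/
/- Formalization of epistemic logic programs (ELPs), following the paper
   "Utilizing Treewidth for Quantitative Reasoning on Epistemic Logic Programs". -/

namespace ELP

variable {α : Type}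

/-- A 3-clause is a disjunction of three literals. -/
abbrev Clause (α : Type) := Lit α × Lit α × Lit α

/-- The atoms of a clause. -/
def clauseAtoms (c : Clause α) : Set α := {c.1.1, c.2.1.1, c.2.2.1}

/-- A literal is true under the assignment `M` (the set of true variables). -/
def LitTrue (M : Set α) (l : Lit α) : Prop := if l.2 then l.1 ∈ M else l.1 ∉ M

/-- `M ⊆ V` is a model of the 3-CNF `F`: every clause contains a true literal. -/
def IsCnfModel (V : Set α) (F : Set (Clause α)) (M : Set α) : Prop :=
  M ⊆ V ∧ ∀ c ∈ F, LitTrue M c.1 ∨ LitTrue M c.2.1 ∨ LitTrue M c.2.2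

/-- The ELP `Π_F` associated with a 3-CNF `F` over variables `V`:
    a rule `← not v, not ¬v` for every `v ∈ V` and a rule
    `← not ℓ₁, not ℓ₂, not ℓ₃` for every clause `ℓ₁ ∨ ℓ₂ ∨ ℓ₃` of `F`. -/
def cnfELP (V : Set α) (F : Set (Clause α)) : Set (ERule α) :=
  { r | ∃ v ∈ V, r = ⟨∅, ∅, ∅, {(v, true), (v, false)}, ∅⟩ } ∪
  { r | ∃ c ∈ F, r = ⟨∅, ∅, ∅, {c.1, c.2.1, c.2.2}, ∅⟩ }

/-- The WVI `I_M = {v : v ∈ M} ∪ {¬v : v ∈ V \ M}` induced by an assignment `M`. -/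
def assignWVI (V M : Set α) : Set (Lit α) :=
  { l | (l.2 = true ∧ l.1 ∈ M) ∨ (l.2 = false ∧ l.1 ∈ V \ M) }

/- Under `I_M` every rule of `Π_F` contains an epistemic literal `not ℓ` with `ℓ ∈ I_M`: one of
`v`, `¬v` for a variable rule, a literal made true by `M` for a clause rule. So the epistemic
reduct is the empty program, which has the answer set `∅`. -/

theorem empty_mem_answerSets {P : Set (PRule α)} (h : IsModelOf ∅ (glReduct P ∅)) :
    ∅ ∈ answerSets P :=
  ⟨h, fun _ hJ _ => Set.subset_empty_iff.mp hJ⟩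

theorem ereduct_eq_empty {P : Set (ERule α)} {I : Set (Lit α)}
    (h : ∀ r ∈ P, ∃ l ∈ r.epos, l ∈ I) : ereduct P I = ∅ := by
  refine Set.eq_empty_of_forall_notMem ?_
  rintro _ ⟨r, hr, hepos, -, -⟩
  obtain ⟨l, hl, hlI⟩ := h r hr
  exact hepos l hl hlI

theorem plausibleFor_of_forall_exists_epos_mem {P : Set (ERule α)} {I : Set (Lit α)}
    (h : ∀ r ∈ peParts P, ∃ l ∈ r.epos, l ∈ I) : PlausibleFor P I := by
  refine ⟨∅, empty_mem_answerSets ?_⟩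
  rintro _ ⟨r, hr, -, -⟩
  rw [ereduct_eq_empty h] at hr
  exact absurd hr (Set.notMem_empty r)

theorem mem_assignWVI_of_litTrue {V M : Set α} {l : Lit α} (hV : l.1 ∈ V) (hl : LitTrue M l) :
    l ∈ assignWVI V M := by
  obtain ⟨a, _ | _⟩ := l
  · exact Or.inr ⟨rfl, hV, by simpa [LitTrue] using hl⟩
  · exact Or.inl ⟨rfl, by simpa [LitTrue] using hl⟩

theorem exists_litTrue_of_mem_cnfELP {V M : Set α} {F : Set (Clause α)}
    (hFV : ∀ c ∈ F, clauseAtoms c ⊆ V) (hM : IsCnfModel V F M) {r : ERule α}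
    (hr : r ∈ cnfELP V F) :
    ∃ l ∈ r.epos, l.1 ∈ V ∧ LitTrue M l := by
  rcases hr with ⟨v, hv, rfl⟩ | ⟨c, hc, rfl⟩
  · by_cases hvM : v ∈ M
    · exact ⟨(v, true), by simp, hv, by simpa [LitTrue] using hvM⟩
    · exact ⟨(v, false), by simp, hv, by simpa [LitTrue] using hvM⟩
  · have hcV := hFV c hc
    rcases hM.2 c hc with h | h | h
    · exact ⟨c.1, by simp, hcV (by simp [clauseAtoms]), h⟩
    · exact ⟨c.2.1, by simp, hcV (by simp [clauseAtoms]), h⟩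
    · exact ⟨c.2.2, by simp, hcV (by simp [clauseAtoms]), h⟩

theorem cnf_model_gives_plausible_general (V : Set α)
    (F : Set (Clause α)) (hFV : ∀ c ∈ F, clauseAtoms c ⊆ V)
    (M : Set α) (hM : IsCnfModel V F M) :
    PlausibleFor (cnfELP V F) (assignWVI V M) := by
  refine plausibleFor_of_forall_exists_epos_mem fun r hr => ?_
  obtain ⟨l, hl, hlV, hlM⟩ := exists_litTrue_of_mem_cnfELP hFV hM hr.1
  exact ⟨l, hl, mem_assignWVI_of_litTrue hlV hlM⟩

/-- If `M ⊆ V` is a model of the 3-CNF `F`, then the WVI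
    `I_M = {v : v ∈ M} ∪ {¬v : v ∈ V \ M}` is a plausible WVI of `Π_F`. -/
theorem cnf_model_gives_plausible (V : Set α) (hV : V.Finite)
    (F : Set (Clause α)) (hF : F.Finite) (hFV : ∀ c ∈ F, clauseAtoms c ⊆ V)
    (M : Set α) (hM : IsCnfModel V F M) :
    PlausibleFor (cnfELP V F) (assignWVI V M) :=
  cnf_model_gives_plausible_general V F hFV M hM

end ELP
end

section
/- Let F be a 3-CNF formula over a finite variable set V and let Π_F be the associated ELP. If I is a WVI over V with I ⊨_p Π_F, then for every variable v ∈ V exactly one of v, ¬v belongs to I, and the assignment M_I := {v ∈ V : v ∈ I} is a model of F. -/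
/- Formalization of epistemic logic programs (ELPs), following the paper
   "Utilizing Treewidth for Quantitative Reasoning on Epistemic Logic Programs". -/

namespace ELP

variable {α : Type}

lemma PRule.not_satBy_empty (J : Set α) : ¬ (⟨∅, ∅, ∅⟩ : PRule α).SatBy J := by
  simp [PRule.SatBy]

lemma answerSets_eq_empty_of_empty_mem {P : Set (PRule α)} (h : ⟨∅, ∅, ∅⟩ ∈ P) :
    answerSets P = ∅ := by
  refine Set.eq_empty_of_forall_notMem fun J hJ => PRule.not_satBy_empty J (hJ.1 _ ?_)
  exact ⟨⟨∅, ∅, ∅⟩, h, Set.empty_inter J, rfl⟩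

/-- A plausible WVI must block every purely-epistemic constraint `← not ℓ₁, …, not ℓₙ`:
otherwise the reduct contains the empty constraint `←`, which has no model. -/
lemma PlausibleFor.exists_mem_of_constraint {P : Set (ERule α)} {I : Set (Lit α)}
    (hpl : PlausibleFor P I) {E : Set (Lit α)} (hr : ⟨∅, ∅, ∅, E, ∅⟩ ∈ peParts P) :
    ∃ l ∈ E, l ∈ I := by
  by_contra! hE
  have hempty : answerSets (ereduct (peParts P) I) = ∅ :=
    answerSets_eq_empty_of_empty_mem ⟨_, hr, hE, fun _ hl => hl.elim, rfl⟩
  exact hpl.ne_empty hempty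

lemma peParts_cnfELP (V : Set α) (F : Set (Clause α)) : peParts (cnfELP V F) = cnfELP V F := by
  refine Set.Subset.antisymm (fun r hr => hr.1) fun r hr => ⟨hr, ?_⟩
  rcases hr with ⟨v, -, rfl⟩ | ⟨c, -, rfl⟩ <;>
    simp [ERule.PurelyEpistemic, ERule.axats, ERule.ats]

lemma IsWVI.xor_of_or {A : Set α} {I : Set (Lit α)} (hI : IsWVI A I) {v : α}
    (h : (v, true) ∈ I ∨ (v, false) ∈ I) : Xor' ((v, true) ∈ I) ((v, false) ∈ I) := by
  have := hI.2 v
  tauto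

lemma IsWVI.litTrue_of_mem {A : Set α} {I : Set (Lit α)} (hI : IsWVI A I) {l : Lit α}
    (hl : l ∈ I) : LitTrue { v ∈ A | (v, true) ∈ I } l := by
  obtain ⟨a, _ | _⟩ := l
  · exact fun ha => hI.2 a ⟨ha.2, hl⟩
  · exact ⟨hI.1 _ hl, hl⟩

theorem plausible_gives_cnf_model_general (V : Set α)
    (F : Set (Clause α))
    (I : Set (Lit α)) (hI : IsWVI V I) (hpl : PlausibleFor (cnfELP V F) I) :
    (∀ v ∈ V, Xor' ((v, true) ∈ I) ((v, false) ∈ I)) ∧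
    IsCnfModel V F { v ∈ V | (v, true) ∈ I } := by
  refine ⟨fun v hv => ?_, fun v hv => hv.1, fun c hc => ?_⟩
  · obtain ⟨l, hl, hlI⟩ := hpl.exists_mem_of_constraint (by
      rw [peParts_cnfELP]; exact Or.inl ⟨v, hv, rfl⟩)
    rcases hl with rfl | rfl
    exacts [hI.xor_of_or (Or.inl hlI), hI.xor_of_or (Or.inr hlI)]
  · obtain ⟨l, hl, hlI⟩ := hpl.exists_mem_of_constraint (by
      rw [peParts_cnfELP]; exact Or.inr ⟨c, hc, rfl⟩)
    rcases hl with rfl | rfl | rfl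
    exacts [Or.inl (hI.litTrue_of_mem hlI), Or.inr (Or.inl (hI.litTrue_of_mem hlI)),
      Or.inr (Or.inr (hI.litTrue_of_mem hlI))]

/-- If `I` is a WVI over `V` with `I ⊨_p Π_F`, then for every `v ∈ V`
    exactly one of `v, ¬v` belongs to `I`, and `M_I = {v ∈ V : v ∈ I}` is a model of `F`. -/
theorem plausible_gives_cnf_model (V : Set α) (hV : V.Finite)
    (F : Set (Clause α)) (hF : F.Finite) (hFV : ∀ c ∈ F, clauseAtoms c ⊆ V)
    (I : Set (Lit α)) (hI : IsWVI V I) (hpl : PlausibleFor (cnfELP V F) I) :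
    (∀ v ∈ V, Xor' ((v, true) ∈ I) ((v, false) ∈ I)) ∧
    IsCnfModel V F { v ∈ V | (v, true) ∈ I } :=
  plausible_gives_cnf_model_general V F I hI hpl

end ELP
end

section
/- World views are uniquely determined by their restriction to the epistemic atoms: if Π is an ELP and W, W' ∈ WVS(Π) satisfy W|ex-ats(Π) = W'|ex-ats(Π), then W = W'. -/
/- Formalization of epistemic logic programs (ELPs), following the paper
   "Utilizing Treewidth for Quantitative Reasoning on Epistemic Logic Programs". -/

namespace ELP

variable {α : Type}

/- Proof idea: the epistemic reduct `Π^W` only inspects the literals of `W` over `ex-ats(Π)`, so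
`W` and `W'` have the same reduct and hence the same answer sets `AS`. A WVI compatible with `AS`
is read off from `AS` itself: `a` is true in it iff `a` lies in every answer set, false iff it lies
in none, and undecided otherwise. -/

theorem ereduct_eq_of_restrict_eq {P : Set (ERule α)} {W W' : Set (Lit α)}
    (h : restrict W (elpExats P) = restrict W' (elpExats P)) :
    ereduct P W = ereduct P W' := by
  have agree : ∀ r ∈ P, ∀ l ∈ r.epos ∪ r.eneg, l ∈ W ↔ l ∈ W' := fun r hr l hl => by
    have hex : l.1 ∈ elpExats P := Set.mem_biUnion hr ⟨l, hl, rfl⟩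
    simpa [restrict, hex] using congrArg (l ∈ ·) h
  ext r'
  constructor <;> rintro ⟨r, hr, hpos, hneg, rfl⟩
  · exact ⟨r, hr, fun l hl => (agree r hr l (.inl hl)).not.mp (hpos l hl),
      fun l hl => (agree r hr l (.inr hl)).mp (hneg l hl), rfl⟩
  · exact ⟨r, hr, fun l hl => (agree r hr l (.inl hl)).not.mpr (hpos l hl),
      fun l hl => (agree r hr l (.inr hl)).mpr (hneg l hl), rfl⟩

namespace Compatible

variable {A : Set α} {I : Set (Lit α)} {Js : Set (Set α)} {a : α} {b : Bool}

theorem mem_iff (hc : Compatible A I Js) (hl : (a, b) ∈ I) {J : Set α} (hJ : J ∈ Js) :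
    a ∈ J ↔ b = true := by
  cases b
  · simpa using hc.2.2.1 a hl J hJ
  · simpa using hc.2.1 a hl J hJ

theorem exists_mem_iff_not (hc : Compatible A I Js) (ha : a ∈ A) (hl : (a, b) ∉ I) :
    ∃ J ∈ Js, (a ∈ J ↔ b = false) := by
  by_cases hl' : (a, !b) ∈ I
  · obtain ⟨J, hJ⟩ := hc.1
    exact ⟨J, hJ, by simpa using hc.mem_iff hl' hJ⟩
  · cases b
    · obtain ⟨⟨J, hJ, haJ⟩, _⟩ := hc.2.2.2 a ha hl' hl
      exact ⟨J, hJ, by simpa using haJ⟩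
    · obtain ⟨_, J, hJ, haJ⟩ := hc.2.2.2 a ha hl hl'
      exact ⟨J, hJ, by simpa using haJ⟩

theorem subset {I' : Set (Lit α)} (hI : IsWVI A I) (hc : Compatible A I Js)
    (hc' : Compatible A I' Js) : I ⊆ I' := by
  rintro ⟨a, b⟩ hl
  by_contra hl'
  obtain ⟨J, hJ, hJ'⟩ := hc'.exists_mem_iff_not (hI.1 _ hl) hl'
  have hb := (hc.mem_iff hl hJ).symm.trans hJ'
  cases b <;> simp at hb

theorem unique {I' : Set (Lit α)} (hI : IsWVI A I) (hI' : IsWVI A I') (hc : Compatible A I Js)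
    (hc' : Compatible A I' Js) : I = I' :=
  (hc.subset hI hc').antisymm (hc'.subset hI' hc)

end Compatible

theorem worldView_unique_of_exats_restrict_general (P : Set (ERule α))
    (W W' : Set (Lit α)) (hW : IsWorldView P W) (hW' : IsWorldView P W')
    (h : restrict W (elpExats P) = restrict W' (elpExats P)) :
    W = W' := by
  have hc := hW.2
  rw [ereduct_eq_of_restrict_eq h] at hc
  exact hc.unique hW.1 hW'.1 hW'.2

/-- World views are uniquely determined by their restriction to the
    epistemic atoms: if `W, W' ∈ WVS(Π)` and `W|ex-ats(Π) = W'|ex-ats(Π)`, then `W = W'`. -/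
theorem worldView_unique_of_exats_restrict (P : Set (ERule α)) (hwf : WfELP P)
    (W W' : Set (Lit α)) (hW : IsWorldView P W) (hW' : IsWorldView P W')
    (h : restrict W (elpExats P) = restrict W' (elpExats P)) :
    W = W' :=
  worldView_unique_of_exats_restrict_general P W W' hW hW' h

end ELP
end

section
/- Let Π be an ELP, A ⊆ ats(Π) a set of atoms, and I a WVI over A. Define Π ⊔ I := Π ∪ {← not ℓ : ℓ ∈ I} ∪ {← ¬ not ¬a, ← ¬ not a : a ∈ A, {a, ¬a} ∩ I = ∅} (in the paper's notation, Π ∪ {← ¬K ℓ : ℓ ∈ I} ∪ {← ¬M a; ← ¬M ¬a : a ∈ A, a ∉ I, ¬a ∉ I}). Then WVS(Π ⊔ I) = {W ∈ WVS(Π) : I ⊆ W and for every a ∈ A with {a, ¬a} ∩ I = ∅ also {a, ¬a} ∩ W = ∅}; i.e., the world views of Π ⊔ I are exactly the world views of Π that extend I and leave each atom of A undecided in I also undecided. -/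
/- Formalization of epistemic logic programs (ELPs), following the paper
   "Utilizing Treewidth for Quantitative Reasoning on Epistemic Logic Programs". -/

namespace ELP

variable {α : Type}

/-- `Π ⊔ I := Π ∪ {← not ℓ : ℓ ∈ I} ∪ {← ¬ not ¬a, ← ¬ not a : a ∈ A, {a,¬a} ∩ I = ∅}`
    (in the paper's notation `Π ∪ {← ¬K ℓ : ℓ ∈ I} ∪ {← ¬M a; ← ¬M ¬a : a undecided}`). -/
def elpSqcup (P : Set (ERule α)) (A : Set α) (I : Set (Lit α)) : Set (ERule α) :=
  P ∪ { r | ∃ l ∈ I, r = ⟨∅, ∅, ∅, {l}, ∅⟩ } ∪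
  { r | ∃ a ∈ A, (a, true) ∉ I ∧ (a, false) ∉ I ∧
        (r = ⟨∅, ∅, ∅, ∅, {(a, false)}⟩ ∨ r = ⟨∅, ∅, ∅, ∅, {(a, true)}⟩) }

/- The rules added to `Π` are constraints whose bodies consist of epistemic literals only, so in
the epistemic reduct by `W` each of them either disappears or becomes the empty constraint `←`,
which no interpretation satisfies. They all disappear exactly when `W` contains `I` and decides no
atom of `A` that `I` leaves undecided; then `(Π ⊔ I)^W = Π^W`, and otherwise `(Π ⊔ I)^W` has no
answer sets, so `W` is not a world view. -/

def ExtendsKeepingUndecided (A : Set α) (I W : Set (Lit α)) : Prop :=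
  I ⊆ W ∧ ∀ a ∈ A, (a, true) ∉ I → (a, false) ∉ I → (a, true) ∉ W ∧ (a, false) ∉ W

lemma answerSets_eq_empty_of_emptyRule_mem {Q : Set (PRule α)}
    (h : (⟨∅, ∅, ∅⟩ : PRule α) ∈ Q) : answerSets Q = ∅ := by
  refine Set.eq_empty_of_forall_notMem fun J ⟨hmodel, _⟩ => ?_
  have hsat := hmodel ⟨∅, ∅, ∅⟩ ⟨⟨∅, ∅, ∅⟩, h, Set.empty_inter J, rfl⟩
  simp [PRule.SatBy] at hsat

lemma elpAts_elpSqcup {P : Set (ERule α)} {A : Set α} (hA : A ⊆ elpAts P)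
    {I : Set (Lit α)} (hI : IsWVI A I) : elpAts (elpSqcup P A I) = elpAts P := by
  refine subset_antisymm ?_ (Set.biUnion_subset_biUnion_left
    (Set.subset_union_left.trans Set.subset_union_left))
  simp only [elpAts, Set.iUnion₂_subset_iff]
  rintro r ((hr | ⟨l, hl, rfl⟩) | ⟨a, ha, -, -, rfl | rfl⟩)
  · exact Set.subset_biUnion_of_mem (u := ERule.ats) hr
  · simpa [ERule.ats, ERule.exats, elpAts] using hA (hI.1 l hl)
  all_goals simpa [ERule.ats, ERule.exats, elpAts] using hA ha

lemma ereduct_elpSqcup_of_extendsKeepingUndecided (P : Set (ERule α)) {A : Set α}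
    {I W : Set (Lit α)} (h : ExtendsKeepingUndecided A I W) :
    ereduct (elpSqcup P A I) W = ereduct P W := by
  refine subset_antisymm ?_ fun _ ⟨r, hr, hpos, hneg, hr'⟩ => ⟨r, .inl (.inl hr), hpos, hneg, hr'⟩
  rintro _ ⟨r, (hr | ⟨l, hl, rfl⟩) | ⟨a, ha, hIt, hIf, rfl | rfl⟩, hpos, hneg, rfl⟩
  · exact ⟨r, hr, hpos, hneg, rfl⟩
  · exact absurd (h.1 hl) (hpos l rfl)
  · exact absurd (hneg _ rfl) (h.2 a ha hIt hIf).2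
  · exact absurd (hneg _ rfl) (h.2 a ha hIt hIf).1

lemma emptyRule_mem_ereduct_elpSqcup_of_not_extendsKeepingUndecided (P : Set (ERule α))
    {A : Set α} {I W : Set (Lit α)} (h : ¬ ExtendsKeepingUndecided A I W) :
    (⟨∅, ∅, ∅⟩ : PRule α) ∈ ereduct (elpSqcup P A I) W := by
  simp only [ExtendsKeepingUndecided, Set.subset_def, not_and_or, not_forall, not_not] at h
  rcases h with ⟨l, hlI, hlW⟩ | ⟨a, ha, hIt, hIf, hWt | hWf⟩
  · exact ⟨⟨∅, ∅, ∅, {l}, ∅⟩, .inl (.inr ⟨l, hlI, rfl⟩), by simpa using hlW, by simp, rfl⟩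
  · exact ⟨⟨∅, ∅, ∅, ∅, {(a, true)}⟩, .inr ⟨a, ha, hIt, hIf, .inr rfl⟩, by simp,
      by simpa using hWt, rfl⟩
  · exact ⟨⟨∅, ∅, ∅, ∅, {(a, false)}⟩, .inr ⟨a, ha, hIt, hIf, .inl rfl⟩, by simp,
      by simpa using hWf, rfl⟩

theorem worldViews_sqcup_general (P : Set (ERule α))
    (A : Set α) (hA : A ⊆ elpAts P) (I : Set (Lit α)) (hI : IsWVI A I) :
    { W : Set (Lit α) | IsWorldView (elpSqcup P A I) W } =
    { W : Set (Lit α) | IsWorldView P W ∧ I ⊆ W ∧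
        ∀ a ∈ A, (a, true) ∉ I → (a, false) ∉ I →
          (a, true) ∉ W ∧ (a, false) ∉ W } := by
  ext W
  change IsWorldView _ W ↔ IsWorldView P W ∧ ExtendsKeepingUndecided A I W
  by_cases h : ExtendsKeepingUndecided A I W
  · simp only [IsWorldView, elpAts_elpSqcup hA hI,
      ereduct_elpSqcup_of_extendsKeepingUndecided P h, h, and_true]
  · have hAS := answerSets_eq_empty_of_emptyRule_mem
      (emptyRule_mem_ereduct_elpSqcup_of_not_extendsKeepingUndecided P h)
    simp [IsWorldView, Compatible, hAS, h]

/-- The world views of `Π ⊔ I` are exactly the world views of `Π`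
    that extend `I` and leave each atom of `A` undecided in `I` also undecided. -/
theorem worldViews_sqcup (P : Set (ERule α)) (hwf : WfELP P)
    (A : Set α) (hA : A ⊆ elpAts P) (I : Set (Lit α)) (hI : IsWVI A I) :
    { W : Set (Lit α) | IsWorldView (elpSqcup P A I) W } =
    { W : Set (Lit α) | IsWorldView P W ∧ I ⊆ W ∧
        ∀ a ∈ A, (a, true) ∉ I → (a, false) ∉ I →
          (a, true) ∉ W ∧ (a, false) ∉ W } :=
  worldViews_sqcup_general P A hA I hI

end ELP
end
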